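/- Let β be a normalized model of a 2^1-map with p+1 edges, and suppose the coordinate x_s of exactly one white vertex v_s of degree 1 does not lie in I (and 0 is a white vertex of degree > 1). Then v_ρ(x_i) = e/(n-1) for all i ≠ s with x_i ≠ 0, and v_ρ(x_i - x_j) = e/(n-1) for all i, j ≠ s with i ≠ j. -/

import Mathlib

/-!
With `P = ∏ (X - xᵢ)^kᵢ` and `Q = ∏ (X - yⱼ)^lⱼ` we have `P - r (X - c) = Q`, so the numerator
`W = (X - c) P' - P` of `(P / (X - c))'` is the same for `P` and `Q`. It is divisible by
`∏ (X - xᵢ)^(kᵢ-1) ∏ (X - yⱼ)^(lⱼ-1)`, which is monic of degree `p + 1`, and its coefficient of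
`X^(p+1)` is `p`. Evaluating the cofactor at `xᵢ` gives
`kᵢ (xᵢ - c) ∏_{t ≠ i} (xᵢ - xₜ) = p ∏ⱼ (xᵢ - yⱼ)^(lⱼ-1)`. At `i = s` this forces `c ≡ x_s`, so `c`
is a unit, and for `i ≠ s` every factor except `p` and the `xᵢ - xₜ` with `t ≠ s` is a unit:
`∑_{t ≠ i, s} v(xᵢ - xₜ) = e`.

It remains to see that the `n` points `xₜ ∈ 𝔪` are equidistant. Let `b` be their largest mutual
distance, attained at `xᵢ`, and `Z` the cluster of the `xₜ` with `v(xₜ - xᵢ) ≥ b`. All distances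
inside `Z` equal `b` and all distances out of `Z` are smaller, so by the identity the
`kₜ ∏_{u ∈ Z, u ≠ t} (xₜ - x_u)` agree to leading order. Since the Lagrange weights
`∏_{u ∈ Z, u ≠ t} (xₜ - x_u)⁻¹` sum to zero, `∑_{t ∈ Z} kₜ ∈ 𝔪`. But `0 < ∑_{t ∈ Z} kₜ < p`
unless `Z` contains all `n` points, so `Z` is everything, and the row sums give `(n - 1) b = e`.
-/

open Polynomial

/-- A normalized model (with respect to a valuation `v` over the prime `p`) of
a `2¹`-map with `p+1` edges, `n+1` white vertices with coordinates `x i` and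
degrees `k i`, and `m+1` black vertices with coordinates `y j` and degrees
`l j`; `c` is the pole and `r` the second critical value of the Belyi
function `β = ∏ (z - x i)^{k i} / (r (z - c))`. -/
structure NormalizedModel {K : Type*} [Field K] (v : AddValuation K (WithTop ℝ))
    (p n m : ℕ) where
  x : Fin (n + 1) → K
  k : Fin (n + 1) → ℕ
  y : Fin (m + 1) → K
  l : Fin (m + 1) → ℕ
  c : K
  r : K
  hx_inj : Function.Injective x
  hy_inj : Function.Injective y
  hk_pos : ∀ i, 0 < k i
  hl_pos : ∀ j, 0 < l j
  hk_sum : ∑ i, k i = p + 1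
  hl_sum : ∑ j, l j = p + 1
  hnm : n + m = p - 1
  belyi : (∏ i, (X - C (x i)) ^ k i) - C r * (X - C c)
      = ∏ j, (X - C (y j)) ^ l j
  white0 : ∃ i, x i = 0 ∧ 1 < k i
  black1 : ∃ j, y j = 1 ∧ 1 < l j
  integral_x : ∀ i, 0 ≤ v (x i)
  integral_y : ∀ j, 0 ≤ v (y j)
  integral_c : 0 ≤ v c
  white_I : ∀ i₁ i₂, ¬ (0 < v (x i₁)) → ¬ (0 < v (x i₂)) → i₁ = i₂
  white_exc : ∀ i, ¬ (0 < v (x i)) → k i = 1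
  black_I : ∀ j₁ j₂, ¬ (0 < v (y j₁ - 1)) → ¬ (0 < v (y j₂ - 1)) → j₁ = j₂
  black_exc : ∀ j, ¬ (0 < v (y j - 1)) → l j = 1

open Finset

theorem Lagrange.sum_nodalWeight_eq_zero {F ι : Type*} [Field F] [DecidableEq ι]
    {s : Finset ι} {v : ι → F} (hvs : Set.InjOn v s) (hs : 2 ≤ #s) :
    ∑ i ∈ s, nodalWeight s v i = 0 := by
  have hbasis : ∀ i ∈ s, Lagrange.basis s v i = C (nodalWeight s v i) * nodal (s.erase i) v :=
    fun i hi => by rw [basis_eq_prod_sub_inv_mul_nodal_div hi, nodal_erase_eq_nodal_div hi]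
  have hcoeff := congrArg (coeff · (#s - 1)) (sum_basis hvs (card_pos.1 (by omega)))
  simp only [finsetSum_coeff, coeff_one] at hcoeff
  rw [if_neg (by omega)] at hcoeff
  rw [← hcoeff]
  refine sum_congr rfl fun i hi => ?_
  rw [hbasis i hi, coeff_C_mul, ← card_erase_of_mem hi, ← natDegree_nodal (v := v),
    nodal_monic.coeff_natDegree, mul_one]

section DerivNumer

variable {K : Type*} [Field K]

/-- The numerator of the derivative of `P / (X - c)`. -/
noncomputable def derivNumer (c : K) (P : K[X]) : K[X] := (X - C c) * derivative P - P

theorem derivNumer_add_C_mul_X_sub_C (c r : K) (P : K[X]) :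
    derivNumer c (P + C r * (X - C c)) = derivNumer c P := by
  simp only [derivNumer, derivative_add, derivative_C_mul, derivative_sub, derivative_X,
    derivative_C]
  ring

theorem pow_sub_one_dvd_derivNumer {c : K} {P q : K[X]} {k : ℕ} (h : q ^ k ∣ P) :
    q ^ (k - 1) ∣ derivNumer c P :=
  dvd_sub ((pow_sub_one_dvd_derivative_of_pow_dvd h).mul_left _)
    ((pow_dvd_pow q (k.sub_le 1)).trans h)

theorem prod_pow_sub_one_dvd_derivNumer {ι : Type*} [Fintype ι] {x : ι → K}
    (hx : Function.Injective x) (k : ι → ℕ) (c : K) :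
    ∏ i, (X - C (x i)) ^ (k i - 1) ∣ derivNumer c (∏ i, (X - C (x i)) ^ k i) :=
  Fintype.prod_dvd_of_coprime (fun _ _ hij => ((pairwise_coprime_X_sub_C hx) hij).pow)
    fun i => pow_sub_one_dvd_derivNumer (dvd_prod_of_mem _ (mem_univ i))

theorem natDegree_derivNumer_le (c : K) (P : K[X]) :
    (derivNumer c P).natDegree ≤ P.natDegree := by
  refine (natDegree_sub_le _ _).trans (max_le ?_ le_rfl)
  rcases eq_or_ne P.natDegree 0 with h0 | h0
  · rw [derivative_of_natDegree_zero h0, mul_zero, natDegree_zero]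
    exact Nat.zero_le _
  · refine natDegree_mul_le.trans ?_
    rw [natDegree_X_sub_C]
    have := natDegree_derivative_lt h0
    omega

theorem coeff_derivNumer_natDegree {P : K[X]} (hP : P.Monic) (c : K) :
    (derivNumer c P).coeff P.natDegree = (P.natDegree : K) - 1 := by
  have hlead := hP.coeff_natDegree
  rw [derivNumer, coeff_sub, hlead, mul_comm]
  rcases hd : P.natDegree with _ | d
  · rw [derivative_of_natDegree_zero hd]
    simp
  · rw [hd] at hlead
    rw [coeff_mul_X_sub_C, coeff_derivative, coeff_derivative, hlead,
      coeff_eq_zero_of_natDegree_lt (by omega)]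
    push_cast
    ring

theorem eval_of_derivNumer_X_sub_C_pow_mul_eq {a c : K} {k : ℕ} {T S : K[X]} (hk : 0 < k)
    (h : derivNumer c ((X - C a) ^ k * T) = (X - C a) ^ (k - 1) * S) :
    S.eval a = k * (a - c) * T.eval a := by
  have hpow : (X - C a) ^ k = (X - C a) ^ (k - 1) * (X - C a) := by
    rw [← pow_succ, Nat.sub_add_cancel hk]
  have hS : S = (X - C c) * (C (k : K) * T + (X - C a) * derivative T) - (X - C a) * T := by
    refine mul_left_cancel₀ (pow_ne_zero _ (X_sub_C_ne_zero a)) (h.symm.trans ?_)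
    rw [derivNumer, derivative_mul, derivative_X_sub_C_pow, hpow]
    ring
  simp only [hS, map_natCast, eval_sub, eval_mul, eval_X, eval_C, eval_add, eval_natCast,
    sub_self, zero_mul, add_zero, sub_zero]
  ring

end DerivNumer

section KeyIdentity

variable {K ι κ : Type*} [Field K]

theorem monic_prod_X_sub_C_pow (s : Finset ι) (x : ι → K) (k : ι → ℕ) :
    (∏ i ∈ s, (X - C (x i)) ^ k i).Monic :=
  monic_prod_of_monic _ _ fun i _ => (monic_X_sub_C (x i)).pow (k i)

theorem natDegree_prod_X_sub_C_pow (s : Finset ι) (x : ι → K) (k : ι → ℕ) :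
    (∏ i ∈ s, (X - C (x i)) ^ k i).natDegree = ∑ i ∈ s, k i := by
  rw [natDegree_prod_of_monic _ _ fun i _ => (monic_X_sub_C (x i)).pow (k i)]
  simp

variable [Fintype ι] [Fintype κ] {x : ι → K} {y : κ → K} {k : ι → ℕ} {l : κ → ℕ} {c r : K}

theorem derivNumer_eq_C_mul_prod (hx : Function.Injective x) (hy : Function.Injective y)
    (hxy : ∀ i j, 1 < k i → 1 < l j → x i ≠ y j)
    (hdeg : ∑ i, (k i - 1) + ∑ j, (l j - 1) = ∑ i, k i)
    (hbelyi : ∏ i, (X - C (x i)) ^ k i - C r * (X - C c) = ∏ j, (X - C (y j)) ^ l j) :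
    derivNumer c (∏ i, (X - C (x i)) ^ k i) = C ((∑ i, k i : ℕ) - 1 : K) *
      ((∏ i, (X - C (x i)) ^ (k i - 1)) * ∏ j, (X - C (y j)) ^ (l j - 1)) := by
  set P := ∏ i, (X - C (x i)) ^ k i
  set D := (∏ i, (X - C (x i)) ^ (k i - 1)) * ∏ j, (X - C (y j)) ^ (l j - 1)
  have hDmonic : D.Monic := (monic_prod_X_sub_C_pow _ _ _).mul (monic_prod_X_sub_C_pow _ _ _)
  have hPdeg : P.natDegree = ∑ i, k i := natDegree_prod_X_sub_C_pow _ _ _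
  have hDdeg : D.natDegree = ∑ i, k i := by
    rw [← hdeg, (monic_prod_X_sub_C_pow _ _ _).natDegree_mul (monic_prod_X_sub_C_pow _ _ _),
      natDegree_prod_X_sub_C_pow, natDegree_prod_X_sub_C_pow]
  have hcross : IsCoprime (∏ i, (X - C (x i)) ^ (k i - 1)) (∏ j, (X - C (y j)) ^ (l j - 1)) := by
    refine IsCoprime.prod_left fun i _ => IsCoprime.prod_right fun j _ => ?_
    rcases Nat.lt_or_ge 1 (k i) with hki | hki
    · rcases Nat.lt_or_ge 1 (l j) with hlj | hlj
      · exact (isCoprime_X_sub_C_of_isUnit_sub (sub_ne_zero.2 (hxy i j hki hlj)).isUnit).pow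
      · rw [Nat.sub_eq_zero_of_le hlj, pow_zero]; exact isCoprime_one_right
    · rw [Nat.sub_eq_zero_of_le hki, pow_zero]; exact isCoprime_one_left
  have hdvd : D ∣ derivNumer c P := by
    refine hcross.mul_dvd (prod_pow_sub_one_dvd_derivNumer hx k c) ?_
    rw [eq_add_of_sub_eq hbelyi, derivNumer_add_C_mul_X_sub_C]
    exact prod_pow_sub_one_dvd_derivNumer hy l c
  have hW := eq_leadingCoeff_mul_of_monic_of_dvd_of_natDegree_le hDmonic hdvd
    ((natDegree_derivNumer_le c P).trans (hPdeg.trans hDdeg.symm).le)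
  have hlead := congrArg (coeff · (∑ i, k i)) hW
  simp only [coeff_C_mul] at hlead
  rw [← hDdeg, hDmonic.coeff_natDegree, mul_one, hDdeg, ← hPdeg,
    coeff_derivNumer_natDegree (monic_prod_X_sub_C_pow _ _ _)] at hlead
  rw [hW, ← hlead, hPdeg]

theorem key_identity [DecidableEq ι] (hx : Function.Injective x) (hy : Function.Injective y)
    (hk : ∀ i, 0 < k i) (hxy : ∀ i j, 1 < k i → 1 < l j → x i ≠ y j)
    (hdeg : ∑ i, (k i - 1) + ∑ j, (l j - 1) = ∑ i, k i)
    (hbelyi : ∏ i, (X - C (x i)) ^ k i - C r * (X - C c) = ∏ j, (X - C (y j)) ^ l j) (i : ι) :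
    (k i : K) * ((x i - c) * ∏ i' ∈ univ.erase i, (x i - x i')) =
      ((∑ i, k i : ℕ) - 1 : K) * ∏ j, (x i - y j) ^ (l j - 1) := by
  have hW := derivNumer_eq_C_mul_prod (c := c) hx hy hxy hdeg hbelyi
  rw [← mul_prod_erase univ _ (mem_univ i),
    ← mul_prod_erase univ (fun i => (X - C (x i)) ^ (k i - 1)) (mem_univ i), mul_assoc,
    mul_left_comm] at hW
  have heval := eval_of_derivNumer_X_sub_C_pow_mul_eq (hk i) hW
  simp only [eval_mul, eval_C, eval_prod, eval_pow, eval_sub, eval_X] at heval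
  have hsplit : ∏ i' ∈ univ.erase i, (x i - x i') ^ k i' =
      (∏ i' ∈ univ.erase i, (x i - x i') ^ (k i' - 1)) * ∏ i' ∈ univ.erase i, (x i - x i') := by
    rw [← prod_mul_distrib]
    exact prod_congr rfl fun i' _ => by rw [← pow_succ, Nat.sub_add_cancel (hk i')]
  have hne : ∏ i' ∈ univ.erase i, (x i - x i') ^ (k i' - 1) ≠ 0 :=
    prod_ne_zero_iff.2 fun i' hi' =>
      pow_ne_zero _ (sub_ne_zero.2 (hx.ne (ne_of_mem_erase hi').symm))
  rw [hsplit] at heval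
  refine mul_left_cancel₀ hne ?_
  linear_combination heval.symm

end KeyIdentity

namespace AddValuation

theorem map_prod {R Γ ι : Type*} [CommRing R] [LinearOrderedAddCommMonoidWithTop Γ]
    (v : AddValuation R Γ) (s : Finset ι) (f : ι → R) :
    v (∏ i ∈ s, f i) = ∑ i ∈ s, v (f i) := by
  classical
  induction s using Finset.induction_on with
  | empty => simp [v.map_one]
  | insert a s ha ih => rw [prod_insert ha, sum_insert ha, v.map_mul, ih]

theorem map_natCast_nonneg {R Γ : Type*} [Ring R] [LinearOrderedAddCommMonoidWithTop Γ]
    (v : AddValuation R Γ) (t : ℕ) : 0 ≤ v (t : R) := by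
  have : (t : R) = ∑ _ ∈ range t, (1 : R) := by simp
  rw [this]
  exact v.map_le_sum fun _ _ => v.map_one.ge

variable {K Γ : Type*} [Field K] [LinearOrderedAddCommGroupWithTop Γ] (v : AddValuation K Γ)

/-- `a` and `b` agree to leading order: `a / b ∈ 1 + 𝔪`. -/
def Close (a b : K) : Prop := v b < v (a - b)

variable {v} {a b a' b' : K}

theorem Close.map_eq (h : v.Close a b) : v a = v b := v.map_eq_of_lt_sub h

theorem Close.ne_zero_right (h : v.Close a b) : b ≠ 0 :=
  v.ne_top_iff.1 (ne_top_of_lt h)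

theorem Close.ne_zero_left (h : v.Close a b) : a ≠ 0 := by
  rw [← v.ne_top_iff, h.map_eq, v.ne_top_iff]
  exact h.ne_zero_right

theorem close_self (ha : a ≠ 0) : v.Close a a := by
  rw [Close, sub_self, v.map_zero, lt_top_iff_ne_top, v.ne_top_iff]
  exact ha

theorem close_sub_sub {z : K} (h : v (b - z) < v (a - b)) : v.Close (a - z) (b - z) := by
  rwa [Close, sub_sub_sub_cancel_right]

theorem Close.mul (h : v.Close a b) (h' : v.Close a' b') : v.Close (a * a') (b * b') := by
  have hb := v.ne_top_iff.2 h.ne_zero_right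
  have hb' := v.ne_top_iff.2 h'.ne_zero_right
  have hsplit : a * a' - b * b' = a * (a' - b') + (a - b) * b' := by ring
  rw [Close, hsplit, v.map_mul]
  refine v.map_lt_add ?_ ?_
  · rw [v.map_mul, h.map_eq]
    exact (add_lt_add_iff_right_of_ne_top hb).2 h'
  · rw [v.map_mul]
    exact (add_lt_add_iff_left_of_ne_top hb').2 h

theorem Close.inv (h : v.Close a b) : v.Close a⁻¹ b⁻¹ := by
  have ha := h.ne_zero_left
  have hb := h.ne_zero_right
  have hfin : v (a⁻¹ * b⁻¹) ≠ ⊤ := v.ne_top_iff.2 (by simp [ha, hb])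
  have hinv : v b⁻¹ = v (b * (a⁻¹ * b⁻¹)) := by
    rw [← mul_assoc, mul_comm b, mul_assoc, mul_inv_cancel₀ hb, mul_one, v.map_inv,
      v.map_inv, h.map_eq]
  have hsub : a⁻¹ - b⁻¹ = -((a - b) * (a⁻¹ * b⁻¹)) := by field_simp; ring
  rw [Close, hinv, hsub, v.map_neg, v.map_mul, v.map_mul (a - b)]
  exact (add_lt_add_iff_left_of_ne_top hfin).2 h

theorem Close.div (h : v.Close a b) (h' : v.Close a' b') : v.Close (a / a') (b / b') := by
  simpa only [div_eq_mul_inv] using h.mul h'.inv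

theorem Close.pow (h : v.Close a b) (t : ℕ) : v.Close (a ^ t) (b ^ t) := by
  induction t with
  | zero => simpa using close_self (v := v) one_ne_zero
  | succ t ih => simpa only [pow_succ] using ih.mul h

theorem Close.prod {ι : Type*} {s : Finset ι} {f g : ι → K} (h : ∀ i ∈ s, v.Close (f i) (g i)) :
    v.Close (∏ i ∈ s, f i) (∏ i ∈ s, g i) := by
  classical
  induction s using Finset.induction_on with
  | empty => simpa using close_self (v := v) one_ne_zero
  | insert i s hi ih =>
    rw [prod_insert hi, prod_insert hi]
    exact (h i (mem_insert_self i s)).mul (ih fun j hj => h j (mem_insert_of_mem hj))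

theorem map_natCast_eq_zero_of_not_dvd {p t : ℕ} (hp : p.Prime) (hvp : 0 < v (p : K))
    (ht : ¬ p ∣ t) : v (t : K) = 0 := by
  obtain ⟨m, hm⟩ := Nat.exists_mul_mod_eq_one_of_coprime
    ((Nat.coprime_comm.1 ((Nat.Prime.coprime_iff_not_dvd hp).2 ht))) hp.one_lt
  have hdecomp : ((t * m : ℕ) : K) = 1 + ((t * m / p : ℕ) : K) * p := by
    conv_lhs => rw [← Nat.mod_add_div (t * m) p, hm.2]
    push_cast; ring
  have hmem : v (1 : K) < v (((t * m / p : ℕ) : K) * p) := by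
    rw [v.map_one, v.map_mul]
    exact lt_add_of_nonneg_of_lt (v.map_natCast_nonneg _) hvp
  have hone : v ((t * m : ℕ) : K) = 0 := by
    rw [hdecomp, v.map_add_eq_of_lt_left hmem, v.map_one]
  refine le_antisymm ?_ (v.map_natCast_nonneg t)
  rw [← hone, Nat.cast_mul, v.map_mul]
  exact le_add_of_nonneg_right (v.map_natCast_nonneg m)

theorem lt_map_sum_of_close_div_nodalWeight {ι : Type*} [DecidableEq ι] {s : Finset ι}
    {x : ι → K} (hx : Set.InjOn x s) (hs : 2 ≤ #s) {w : ι → K} {i : ι} (hi : i ∈ s)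
    (hclose : ∀ t ∈ s, v.Close (w t / Lagrange.nodalWeight s x t)
      (w i / Lagrange.nodalWeight s x i))
    (hval : ∀ t ∈ s, v (Lagrange.nodalWeight s x t) = v (Lagrange.nodalWeight s x i)) :
    v (w i) < v (∑ t ∈ s, w t) := by
  set N := Lagrange.nodalWeight s x
  have hN : ∀ t ∈ s, N t ≠ 0 := fun t ht => Lagrange.nodalWeight_ne_zero hx ht
  have hsum : ∑ t ∈ s, w t = ∑ t ∈ s, (w t / N t - w i / N i) * N t := by
    simp only [sub_mul, sum_sub_distrib, ← mul_sum, N, Lagrange.sum_nodalWeight_eq_zero hx hs,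
      mul_zero, sub_zero]
    exact sum_congr rfl fun t ht => (div_mul_cancel₀ _ (hN t ht)).symm
  rw [hsum]
  refine v.map_lt_sum (v.ne_top_iff.2 (div_ne_zero_iff.1 (hclose i hi).ne_zero_left).1) ?_
  intro t ht
  calc v (w i) = v (w i / N i) + v (N t) := by
        rw [hval t ht, ← v.map_mul, div_mul_cancel₀ _ (hN i hi)]
    _ < v (w t / N t - w i / N i) + v (N t) :=
        (add_lt_add_iff_left_of_ne_top (v.ne_top_iff.2 (hN t ht))).2 (hclose t ht)
    _ = v ((w t / N t - w i / N i) * N t) := (v.map_mul _ _).symm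

theorem lt_map_sum_of_cluster {ι : Type*} [Fintype ι] [DecidableEq ι] {x : ι → K}
    (hx : Function.Injective x) {Z : Finset ι} (hZ : 2 ≤ #Z) {b : Γ}
    (hin : ∀ t ∈ Z, ∀ u ∈ Z, t ≠ u → v (x t - x u) = b)
    (hout : ∀ t ∈ Z, ∀ u ∉ Z, v (x t - x u) < b) {c d : K} (hc : ∀ t ∈ Z, v (x t - c) < b)
    (hd : d ≠ 0) {w Y : ι → K} {i : ι} (hi : i ∈ Z) (hY : ∀ t ∈ Z, v.Close (Y t) (Y i))
    (hkey : ∀ t ∈ Z, w t * ((x t - c) * ∏ u ∈ univ.erase t, (x t - x u)) = d * Y t) :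
    v (w i) < v (∑ t ∈ Z, w t) := by
  set R : ι → K := fun t => (x t - c) * ∏ u ∈ univ \ Z, (x t - x u)
  have hge : ∀ t ∈ Z, b ≤ v (x t - x i) := fun t ht => by
    rcases eq_or_ne t i with rfl | hti
    · simp
    · exact (hin t ht i hi hti).ge
  have hR : ∀ t ∈ Z, v.Close (R t) (R i) := fun t ht =>
    (close_sub_sub ((hc i hi).trans_le (hge t ht))).mul
      (Close.prod fun u hu => close_sub_sub ((hout i hi u (mem_sdiff.1 hu).2).trans_le (hge t ht)))
  have hdiv : ∀ t ∈ Z, w t / Lagrange.nodalWeight Z x t = d * Y t / R t := fun t ht => by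
    have hsplit : ∏ u ∈ univ.erase t, (x t - x u) =
        (∏ u ∈ univ \ Z, (x t - x u)) * ∏ u ∈ Z.erase t, (x t - x u) := by
      rw [← prod_sdiff (erase_subset_erase t (subset_univ Z))]
      congr 2
      ext u
      simp only [mem_sdiff, mem_erase, mem_univ, and_true, true_and]
      exact ⟨fun h hu => h.2 ⟨h.1, hu⟩, fun h => ⟨fun hut => h (hut ▸ ht), fun h' => h h'.2⟩⟩
    rw [Lagrange.nodalWeight, prod_inv_distrib, div_inv_eq_mul, eq_div_iff (hR t ht).ne_zero_left,
      ← hkey t ht, hsplit]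
    ring
  refine lt_map_sum_of_close_div_nodalWeight hx.injOn hZ hi (fun t ht => ?_) (fun t ht => ?_)
  · rw [hdiv t ht, hdiv i hi, mul_div_assoc, mul_div_assoc]
    exact (close_self hd).mul ((hY t ht).div (hR t ht))
  · have hval : ∀ t ∈ Z, v (Lagrange.nodalWeight Z x t) = (#Z - 1) • -b := fun t ht => by
      rw [Lagrange.nodalWeight, map_prod, ← card_erase_of_mem ht, ← sum_const]
      exact sum_congr rfl fun u hu => by
        rw [v.map_inv, hin t ht u (mem_of_mem_erase hu) (ne_of_mem_erase hu).symm]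
    rw [hval t ht, hval i hi]

theorem map_sum_natCast_eq_zero_of_ssubset {ι : Type*} {p : ℕ} (hp : p.Prime)
    (hvp : 0 < v (p : K)) {k : ι → ℕ} (hk : ∀ i, 0 < k i) {B Z : Finset ι}
    (hB : ∑ i ∈ B, k i ≤ p) (hZ : Z ⊂ B) (hZne : Z.Nonempty) :
    v (∑ i ∈ Z, (k i : K)) = 0 := by
  obtain ⟨j, hjB, hjZ⟩ := exists_of_ssubset hZ
  rw [← Nat.cast_sum]
  refine v.map_natCast_eq_zero_of_not_dvd hp hvp
    (Nat.not_dvd_of_pos_of_lt (sum_pos (fun i _ => hk i) hZne) ?_)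
  exact (sum_lt_sum_of_subset hZ.subset hjB hjZ (hk j) fun _ _ _ => Nat.zero_le _).trans_le hB

end AddValuation

section FirstCase

variable {K Γ ι : Type*} [Field K] [LinearOrderedAddCommGroupWithTop Γ] [Fintype ι]
  [DecidableEq ι]

open AddValuation

/-- The white vertices in the first case of Theorem 5.1; `Y i` stands for
`∏ⱼ (x i - y j) ^ (l j - 1)`. -/
structure FirstCaseData (v : AddValuation K Γ) (p : ℕ) (x : ι → K) (k : ι → ℕ) (c : K)
    (Y : ι → K) (s : ι) : Prop where
  injective : Function.Injective x
  map_x_self : v (x s) = 0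
  pos_map_x : ∀ i, i ≠ s → 0 < v (x i)
  map_c : v c = 0
  prime : p.Prime
  natCast_ne_zero : (p : K) ≠ 0
  pos_map_p : 0 < v (p : K)
  pos_k : ∀ i, 0 < k i
  sum_k_le : ∑ i ∈ univ.erase s, k i ≤ p
  map_Y : ∀ i, i ≠ s → v (Y i) = 0
  close_Y : ∀ i j, i ≠ s → j ≠ s → v.Close (Y i) (Y j)
  key : ∀ i, i ≠ s → (k i : K) * ((x i - c) * ∏ t ∈ univ.erase i, (x i - x t)) = p * Y i

namespace FirstCaseData

variable {v : AddValuation K Γ} {p : ℕ} {x : ι → K} {k : ι → ℕ} {c : K} {Y : ι → K} {s : ι}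
  {i j : ι}

theorem map_sub_c (h : FirstCaseData v p x k c Y s) (hi : i ≠ s) : v (x i - c) = 0 := by
  rw [v.map_sub_eq_of_lt_right (h.map_c ▸ h.pos_map_x i hi), h.map_c]

theorem map_sub_x_self (h : FirstCaseData v p x k c Y s) (hi : i ≠ s) :
    v (x i - x s) = 0 := by
  rw [v.map_sub_eq_of_lt_right (h.map_x_self ▸ h.pos_map_x i hi), h.map_x_self]

theorem pos_map_sub (h : FirstCaseData v p x k c Y s) (hi : i ≠ s) (hj : j ≠ s) :
    0 < v (x i - x j) :=
  (lt_min (h.pos_map_x i hi) (h.pos_map_x j hj)).trans_le (v.map_sub _ _)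

theorem map_k (h : FirstCaseData v p x k c Y s) (hi : i ≠ s) (hj : j ≠ s) (hij : i ≠ j) :
    v (k i : K) = 0 := by
  simpa using map_sum_natCast_eq_zero_of_ssubset h.prime h.pos_map_p h.pos_k h.sum_k_le
    ((ssubset_iff_of_subset (singleton_subset_iff.2 (mem_erase.2 ⟨hi, mem_univ i⟩))).2
      ⟨j, mem_erase.2 ⟨hj, mem_univ j⟩, by simpa using hij.symm⟩)
    (singleton_nonempty i)

theorem sum_map_sub (h : FirstCaseData v p x k c Y s) (hi : i ≠ s) (hki : v (k i : K) = 0) :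
    ∑ t ∈ (univ.erase s).erase i, v (x i - x t) = v (p : K) := by
  have hval := congrArg v (h.key i hi)
  rw [v.map_mul, v.map_mul, v.map_mul, hki, h.map_sub_c hi, h.map_Y i hi, v.map_prod,
    ← add_sum_erase _ _ (mem_erase.2 ⟨hi.symm, mem_univ s⟩), h.map_sub_x_self hi,
    erase_right_comm] at hval
  simpa using hval

theorem le_map_sub_of_forall_le (h : FirstCaseData v p x k c Y s) (hi : i ≠ s) (hj : j ≠ s)
    (hij : i ≠ j) (hmax : ∀ t u, t ≠ s → u ≠ s → t ≠ u → v (x t - x u) ≤ v (x i - x j))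
    {t : ι} (ht : t ≠ s) : v (x i - x j) ≤ v (x t - x i) := by
  set b := v (x i - x j)
  set Z := (univ.erase s).filter fun t => b ≤ v (x t - x i)
  have hb : 0 < b := h.pos_map_sub hi hj
  have hmemZ : ∀ {t}, t ∈ Z ↔ t ≠ s ∧ b ≤ v (x t - x i) := by simp [Z]
  have hiZ : i ∈ Z := hmemZ.2 ⟨hi, by simp⟩
  have hjZ : j ∈ Z := hmemZ.2 ⟨hj, (v.map_sub_swap _ _).le⟩
  suffices hZ : Z = univ.erase s from (hmemZ.1 (hZ ▸ mem_erase.2 ⟨ht, mem_univ t⟩)).2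
  by_contra hZB
  have hin : ∀ t ∈ Z, ∀ u ∈ Z, t ≠ u → v (x t - x u) = b := fun t ht u hu htu =>
    le_antisymm (hmax t u (hmemZ.1 ht).1 (hmemZ.1 hu).1 htu) (by
      simpa using v.map_le_sub (hmemZ.1 ht).2 (hmemZ.1 hu).2)
  have hout : ∀ t ∈ Z, ∀ u ∉ Z, v (x t - x u) < b := fun t ht u hu => by
    rcases eq_or_ne u s with rfl | hus
    · rwa [h.map_sub_x_self (hmemZ.1 ht).1]
    · have hlt : v (x u - x i) < b := lt_of_not_ge fun hle => hu (hmemZ.2 ⟨hus, hle⟩)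
      rw [← sub_sub_sub_cancel_right _ _ (x i),
        v.map_sub_eq_of_lt_right (hlt.trans_le (hmemZ.1 ht).2)]
      exact hlt
  have hlt := lt_map_sum_of_cluster h.injective (one_lt_card.2 ⟨i, hiZ, j, hjZ, hij⟩) hin hout
    (fun t ht => h.map_sub_c (hmemZ.1 ht).1 ▸ hb) h.natCast_ne_zero (w := fun t => (k t : K))
    hiZ (fun t ht => h.close_Y t i (hmemZ.1 ht).1 hi) (fun t ht => h.key t (hmemZ.1 ht).1)
  rw [h.map_k hi hj hij, map_sum_natCast_eq_zero_of_ssubset h.prime h.pos_map_p h.pos_k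
    h.sum_k_le (ssubset_of_subset_of_ne (filter_subset _ _) hZB) ⟨i, hiZ⟩] at hlt
  exact lt_irrefl _ hlt

theorem map_sub_eq_of_forall_le (h : FirstCaseData v p x k c Y s) (hi : i ≠ s) (hj : j ≠ s)
    (hij : i ≠ j) (hmax : ∀ t u, t ≠ s → u ≠ s → t ≠ u → v (x t - x u) ≤ v (x i - x j))
    {t u : ι} (ht : t ≠ s) (hu : u ≠ s) (htu : t ≠ u) : v (x t - x u) = v (x i - x j) :=
  le_antisymm (hmax t u ht hu htu) (by
    simpa using v.map_le_sub (h.le_map_sub_of_forall_le hi hj hij hmax ht)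
      (h.le_map_sub_of_forall_le hi hj hij hmax hu))

theorem nsmul_map_sub_eq (h : FirstCaseData v p x k c Y s) (hi : i ≠ s) (hj : j ≠ s)
    (hij : i ≠ j) : (#(univ.erase s) - 1) • v (x i - x j) = v (p : K) := by
  obtain ⟨⟨i₀, j₀⟩, hmem, hmax⟩ := exists_max_image (univ.erase s).offDiag
    (fun q => v (x q.1 - x q.2)) ⟨(i, j), by simp [hi, hj, hij]⟩
  simp only [mem_offDiag, mem_erase, mem_univ, and_true] at hmem
  have heq : ∀ {t u}, t ≠ s → u ≠ s → t ≠ u → v (x t - x u) = v (x i₀ - x j₀) :=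
    h.map_sub_eq_of_forall_le hmem.1 hmem.2.1 hmem.2.2
      fun t u ht hu htu => hmax (t, u) (by simp [ht, hu, htu])
  rw [← h.sum_map_sub hi (h.map_k hi hj hij), heq hi hj hij,
    sum_congr rfl fun t ht =>
      heq hi (mem_erase.1 (mem_of_mem_erase ht)).1 (ne_of_mem_erase ht).symm,
    sum_const, card_erase_of_mem (mem_erase.2 ⟨hi, mem_univ i⟩)]

end FirstCaseData

end FirstCase

namespace NormalizedModel

variable {K : Type*} [Field K] {v : AddValuation K (WithTop ℝ)} {p n m : ℕ}
  (D : NormalizedModel v p n m)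

theorem map_y_eq_zero {j : Fin (m + 1)} (hj : 1 < D.l j) : v (D.y j) = 0 := by
  have hI : 0 < v (D.y j - 1) := by
    by_contra h
    exact hj.ne' (D.black_exc j h)
  rw [← v.map_one]
  exact v.map_eq_of_lt_sub (v.map_one ▸ hI)

theorem x_ne_y (i : Fin (n + 1)) (j : Fin (m + 1)) (hi : 1 < D.k i) (hj : 1 < D.l j) :
    D.x i ≠ D.y j := by
  have hI : 0 < v (D.x i) := by
    by_contra h
    exact hi.ne' (D.white_exc i h)
  intro h
  rw [h, D.map_y_eq_zero hj] at hI
  exact lt_irrefl _ hI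

theorem map_sub_y {a : K} (ha : 0 < v a) {j : Fin (m + 1)} (hj : 1 < D.l j) :
    v (a - D.y j) = 0 := by
  rw [v.map_sub_eq_of_lt_right (D.map_y_eq_zero hj ▸ ha), D.map_y_eq_zero hj]

theorem map_prod_sub_y {a : K} (ha : 0 < v a) :
    v (∏ j, (a - D.y j) ^ (D.l j - 1)) = 0 := by
  rw [v.map_prod]
  refine sum_eq_zero fun j _ => ?_
  rcases Nat.lt_or_ge 1 (D.l j) with hj | hj
  · rw [v.map_pow, D.map_sub_y ha hj, nsmul_zero]
  · rw [Nat.sub_eq_zero_of_le hj, pow_zero, v.map_one]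

theorem close_prod_sub_y {a b : K} (ha : 0 < v a) (hb : 0 < v b) :
    v.Close (∏ j, (a - D.y j) ^ (D.l j - 1)) (∏ j, (b - D.y j) ^ (D.l j - 1)) := by
  refine AddValuation.Close.prod fun j _ => ?_
  rcases Nat.lt_or_ge 1 (D.l j) with hj | hj
  · refine (AddValuation.close_sub_sub ?_).pow _
    rw [D.map_sub_y hb hj]
    exact (lt_min ha hb).trans_le (v.map_sub a b)
  · rw [Nat.sub_eq_zero_of_le hj, pow_zero, pow_zero]
    exact AddValuation.close_self one_ne_zero

theorem key_identity (hp : 1 ≤ p) (i : Fin (n + 1)) :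
    (D.k i : K) * ((D.x i - D.c) * ∏ i' ∈ univ.erase i, (D.x i - D.x i')) =
      p * ∏ j, (D.x i - D.y j) ^ (D.l j - 1) := by
  have hdeg : ∑ i, (D.k i - 1) + ∑ j, (D.l j - 1) = ∑ i, D.k i := by
    rw [sum_tsub_distrib _ fun i _ => D.hk_pos i, sum_tsub_distrib _ fun j _ => D.hl_pos j]
    simp only [sum_const, card_univ, Fintype.card_fin, smul_eq_mul, mul_one, D.hk_sum, D.hl_sum]
    have := D.hnm
    omega
  rw [_root_.key_identity D.hx_inj D.hy_inj D.hk_pos D.x_ne_y hdeg D.belyi i, D.hk_sum]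
  push_cast
  ring

theorem map_c_eq_zero (hvp : 0 < v (p : K)) (hp : 1 ≤ p) {s : Fin (n + 1)} (hs_deg : D.k s = 1)
    (hs : v (D.x s) = 0) (honly : ∀ i, i ≠ s → 0 < v (D.x i)) : v D.c = 0 := by
  have hval := congrArg v (D.key_identity hp s)
  rw [hs_deg, Nat.cast_one, one_mul, v.map_mul, v.map_mul, v.map_prod,
    sum_eq_zero fun i hi => by
      rw [v.map_sub_eq_of_lt_left (hs ▸ honly i (ne_of_mem_erase hi)), hs], add_zero] at hval
  have hI : v (D.x s) < v (D.x s - D.c) := by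
    rw [hs, hval, v.map_prod]
    refine hvp.trans_le (le_add_of_nonneg_right (sum_nonneg fun j _ => ?_))
    rw [v.map_pow]
    exact nsmul_nonneg (v.map_le_sub (D.integral_x s) (D.integral_y j)) _
  rw [← sub_sub_cancel (D.x s) D.c, v.map_sub_eq_of_lt_left hI, hs]

theorem firstCaseData (hp : p.Prime) (hvp : 0 < v (p : K)) (hpK : (p : K) ≠ 0)
    {s : Fin (n + 1)} (hs_deg : D.k s = 1) (hs : v (D.x s) = 0)
    (honly : ∀ i, i ≠ s → 0 < v (D.x i)) :
    FirstCaseData v p D.x D.k D.c (fun i => ∏ j, (D.x i - D.y j) ^ (D.l j - 1)) s where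
  injective := D.hx_inj
  map_x_self := hs
  pos_map_x := honly
  map_c := D.map_c_eq_zero hvp hp.one_lt.le hs_deg hs honly
  prime := hp
  natCast_ne_zero := hpK
  pos_map_p := hvp
  pos_k := D.hk_pos
  sum_k_le := by
    have := add_sum_erase univ D.k (mem_univ s)
    rw [D.hk_sum, hs_deg] at this
    omega
  map_Y := fun i hi => D.map_prod_sub_y (honly i hi)
  close_Y := fun i j hi hj => D.close_prod_sub_y (honly i hi) (honly j hj)
  key := fun i _ => D.key_identity hp.one_lt.le i

end NormalizedModel

theorem WithTop.eq_coe_div_of_nsmul_eq {m : ℕ} {b : WithTop ℝ} {e : ℝ} (he : e ≠ 0)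
    (h : m • b = e) : b = ((e / m : ℝ) : WithTop ℝ) := by
  rcases m with _ | m
  · exact absurd (WithTop.coe_eq_zero.1 (by simpa using h.symm)) he
  induction b with
  | top => simp [succ_nsmul] at h
  | coe r =>
    rw [← WithTop.coe_nsmul, WithTop.coe_inj, nsmul_eq_mul] at h
    rw [WithTop.coe_inj, ← h]
    field_simp

/-- first case of Theorem 5.1: if the coordinate `x s` of
exactly one white vertex `v s`, of degree 1, does not lie in `I`, then
`v(xᵢ) = e/(n-1)` for all `i ≠ s` with `xᵢ ≠ 0`, and
`v(xᵢ - xⱼ) = e/(n-1)` for all `i, j ≠ s`, `i ≠ j`. -/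
theorem stmt12 {K : Type*} [Field K] (v : AddValuation K (WithTop ℝ))
    (p n m : ℕ) (hp : p.Prime) (hn : 2 ≤ n)
    (D : NormalizedModel v p n m)
    (e : ℝ) (he : 0 < e) (hvp : v (p : K) = (e : WithTop ℝ))
    (s : Fin (n + 1)) (hs_deg : D.k s = 1) (hs : ¬ (0 < v (D.x s)))
    (honly : ∀ i, i ≠ s → 0 < v (D.x i)) :
    (∀ i, i ≠ s → D.x i ≠ 0 →
        v (D.x i) = ((e / ((n : ℝ) - 1) : ℝ) : WithTop ℝ)) ∧
    ∀ i j, i ≠ s → j ≠ s → i ≠ j →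
      v (D.x i - D.x j) = ((e / ((n : ℝ) - 1) : ℝ) : WithTop ℝ) := by
  have hvp' : 0 < v (p : K) := hvp ▸ WithTop.coe_pos.2 he
  have h := D.firstCaseData hp hvp' (fun h0 => by simp [h0] at hvp) hs_deg
    (le_antisymm (not_lt.1 hs) (D.integral_x s)) honly
  have hdist : ∀ i j, i ≠ s → j ≠ s → i ≠ j →
      v (D.x i - D.x j) = ((e / ((n : ℝ) - 1) : ℝ) : WithTop ℝ) := fun i j hi hj hij => by
    have := h.nsmul_map_sub_eq hi hj hij
    rw [card_erase_of_mem (mem_univ s), card_univ, Fintype.card_fin, Nat.add_sub_cancel,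
      hvp] at this
    rw [WithTop.eq_coe_div_of_nsmul_eq he.ne' this, Nat.cast_sub (by omega), Nat.cast_one]
  refine ⟨fun i hi hxi => ?_, hdist⟩
  obtain ⟨i₀, hx₀, hk₀⟩ := D.white0
  have hi₀ : i₀ ≠ s := by
    rintro rfl
    omega
  simpa [hx₀] using hdist i i₀ hi hi₀ fun h => hxi (h ▸ hx₀)
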